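/- arXiv:2405.03850 — 6 statements merged into one kernel-verified Lean document; each statement's English description precedes it below -/
import Mathlib

section
/- Let f : 𝔽₂ⁿ → 𝔽₂ᵐ be a Boolean function and y ∈ 𝔽₂ᵐ. (i) If f is y-constant, then for every z ∈ 𝔽₂ⁿ with z ≠ 0, Σ_{x ∈ 𝔽₂ⁿ} (−1)^{y·f(x) + x·z} = 0, and |Σ_{x ∈ 𝔽₂ⁿ} (−1)^{y·f(x)}| = 2ⁿ (so the GPK algorithm with marker y outputs 0 with certainty). (ii) If f is y-balanced, then Σ_{x ∈ 𝔽₂ⁿ} (−1)^{y·f(x)} = 0 (so the GPK algorithm with marker y outputs a string different from 0 with certainty). -/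
/-- The dot product of two vectors in `𝔽₂ᵏ`. -/
def dotp {k : ℕ} (u v : Fin k → ZMod 2) : ZMod 2 := ∑ i, u i * v i

/-- `f` is `y`-balanced: `y·f(x) = 0` for exactly half of the inputs `x`. -/
def IsBalancedFor {n m : ℕ} (f : (Fin n → ZMod 2) → Fin m → ZMod 2)
    (y : Fin m → ZMod 2) : Prop :=
  (Finset.univ.filter fun x => dotp y (f x) = 0).card =
    (Finset.univ.filter fun x => dotp y (f x) = 1).card

/-- `f` is `y`-constant: the map `x ↦ y·f(x)` is constant. -/
def IsConstantFor {n m : ℕ} (f : (Fin n → ZMod 2) → Fin m → ZMod 2)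
    (y : Fin m → ZMod 2) : Prop :=
  ∀ x x' : Fin n → ZMod 2, dotp y (f x) = dotp y (f x')

lemma chi_add : ∀ a b : ZMod 2,
    (-1 : ℤ) ^ (a + b).val = (-1 : ℤ) ^ a.val * (-1 : ℤ) ^ b.val := by decide

lemma zmod2_eq_one : ∀ a : ZMod 2, a ≠ 0 → a = 1 := by decide

lemma zmod2_add_one_one : ∀ a : ZMod 2, a + 1 + 1 = a := by decide

lemma zmod2_add_one_ne : ∀ a : ZMod 2, a + 1 ≠ a := by decide

lemma dotp_update_add {n : ℕ} (x z : Fin n → ZMod 2) (i : Fin n) :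
    dotp (Function.update x i (x i + 1)) z = dotp x z + z i := by
  unfold dotp
  rw [Fintype.sum_eq_add_sum_compl i, Fintype.sum_eq_add_sum_compl i
    (fun j => x j * z j)]
  have : ∀ j ∈ ({i} : Finset (Fin n))ᶜ,
      Function.update x i (x i + 1) j * z j = x j * z j := by
    intro j hj
    simp only [Finset.mem_compl, Finset.mem_singleton] at hj
    rw [Function.update_of_ne hj]
  rw [Finset.sum_congr rfl this, Function.update_self]
  ring

lemma sum_chi_dotp {n : ℕ} (z : Fin n → ZMod 2) (hz : z ≠ 0) :
    ∑ x : Fin n → ZMod 2, (-1 : ℤ) ^ (dotp x z).val = 0 := by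
  obtain ⟨i, hi⟩ : ∃ i, z i ≠ 0 := by
    by_contra h
    push_neg at h
    exact hz (funext h)
  have hzi : z i = 1 := zmod2_eq_one _ hi
  refine Finset.sum_involution (fun x _ => Function.update x i (x i + 1)) ?_ ?_
    (fun x _ => Finset.mem_univ _) ?_
  · intro x _
    rw [dotp_update_add, hzi, chi_add]
    have : (-1 : ℤ) ^ ((1 : ZMod 2)).val = -1 := rfl
    rw [this]; ring
  · intro x _ _ h
    exact zmod2_add_one_ne (x i) (by simpa using congrFun h i)
  · intro x _
    funext j
    rcases eq_or_ne j i with rfl | hji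
    · simp [zmod2_add_one_one]
    · simp [Function.update_of_ne hji]

/-- GPK and balanced functions: if `f` is `y`-constant, the GPK amplitude of every
nonzero outcome `z` vanishes and the amplitude of `0` has absolute value `2ⁿ` (so the
output is `0` with certainty); if `f` is `y`-balanced, the amplitude of `0` vanishes
(so the output is nonzero with certainty). -/
theorem gpk_constant_and_balanced (n m : ℕ)
    (f : (Fin n → ZMod 2) → Fin m → ZMod 2) (y : Fin m → ZMod 2) :
    (IsConstantFor f y →
      (∀ z : Fin n → ZMod 2, z ≠ 0 →
        (∑ x : Fin n → ZMod 2, (-1 : ℤ) ^ (dotp y (f x) + dotp x z).val) = 0) ∧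
      |∑ x : Fin n → ZMod 2, (-1 : ℤ) ^ (dotp y (f x)).val| = 2 ^ n) ∧
    (IsBalancedFor f y →
      (∑ x : Fin n → ZMod 2, (-1 : ℤ) ^ (dotp y (f x)).val) = 0) := by
  constructor
  · intro hc
    set c := dotp y (f 0) with hcdef
    have hcx : ∀ x, dotp y (f x) = c := fun x => hc x 0
    constructor
    · intro z hz
      calc ∑ x : Fin n → ZMod 2, (-1 : ℤ) ^ (dotp y (f x) + dotp x z).val
          = ∑ x : Fin n → ZMod 2, (-1 : ℤ) ^ c.val * (-1 : ℤ) ^ (dotp x z).val := by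
            refine Finset.sum_congr rfl fun x _ => ?_
            rw [hcx x, chi_add]
        _ = (-1 : ℤ) ^ c.val * ∑ x : Fin n → ZMod 2, (-1 : ℤ) ^ (dotp x z).val := by
            rw [Finset.mul_sum]
        _ = 0 := by rw [sum_chi_dotp z hz, mul_zero]
    · have : ∑ x : Fin n → ZMod 2, (-1 : ℤ) ^ (dotp y (f x)).val
          = (2 ^ n : ℤ) * (-1 : ℤ) ^ c.val := by
        rw [Finset.sum_congr rfl fun x _ => by rw [hcx x], Finset.sum_const,
          Finset.card_univ]
        simp [Fintype.card_fun, mul_comm]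
      rw [this, abs_mul, abs_pow]
      simp
  · intro hb
    classical
    rw [← Finset.sum_filter_add_sum_filter_not Finset.univ
      (fun x => dotp y (f x) = 0)]
    have h1 : ∀ x ∈ Finset.univ.filter (fun x => dotp y (f x) = 0),
        (-1 : ℤ) ^ (dotp y (f x)).val = 1 := by
      intro x hx
      simp only [Finset.mem_filter] at hx
      rw [hx.2]; rfl
    have h2 : ∀ x ∈ Finset.univ.filter (fun x => ¬ dotp y (f x) = 0),
        (-1 : ℤ) ^ (dotp y (f x)).val = -1 := by
      intro x hx
      simp only [Finset.mem_filter] at hx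
      rw [zmod2_eq_one _ hx.2]; rfl
    rw [Finset.sum_congr rfl h1, Finset.sum_congr rfl h2, Finset.sum_const,
      Finset.sum_const]
    have hfilter : Finset.univ.filter (fun x => ¬ dotp y (f x) = 0)
        = Finset.univ.filter (fun x => dotp y (f x) = 1) := by
      refine Finset.filter_congr fun x _ => ?_
      constructor
      · intro h; exact zmod2_eq_one _ h
      · intro h; rw [h]; exact one_ne_zero
    rw [hfilter, hb]
    ring
end

section
/- Let f : 𝔽₂ⁿ → 𝔽₂ᵐ be a Boolean function. Define the Hadamard transform H_k on V_k = ((Fin k → ZMod 2) → ℂ) by (H_k g)(z) = 2^{−k/2} Σ_{x} (−1)^{x·z} g(x), let U_f act on V = ((Fin n → ZMod 2) × (Fin m → ZMod 2)) → ℂ by (U_f g)(x, w) = g(x, w + f(x)), and let H_{n+m} act on V by ((H_{n+m}) g)(z, w) = 2^{−(n+m)/2} Σ_{x, v} (−1)^{x·z + v·w} g(x, v), and H_n ⊗ id by ((H_n ⊗ id) g)(z, w) = 2^{−n/2} Σ_{x} (−1)^{x·z} g(x, w). Then for every y ∈ 𝔽₂ᵐ, applying (H_n ⊗ id) ∘ U_f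 ∘ H_{n+m} to the indicator function δ_{(0, y)} of the basis state |0⟩_n ⊗ |y⟩_m yields the function whose value at (z, w) is (1/2ⁿ)·(Σ_{x ∈ 𝔽₂ⁿ} (−1)^{y·f(x) + x·z})·2^{−m/2}·(−1)^{y·w}. -/
lemma neg_one_pow_add (a b : ZMod 2) :
    (-1 : ℂ) ^ ((a + b).val) = (-1) ^ a.val * (-1) ^ b.val := by
  rcases (show ∀ c : ZMod 2, c = 0 ∨ c = 1 by decide) a with rfl | rfl <;>
  rcases (show ∀ c : ZMod 2, c = 0 ∨ c = 1 by decide) b with rfl | rfl <;>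
  norm_num [ZMod.val_one, show ((1:ZMod 2)+1) = 0 from rfl, show ZMod.val (2:ZMod 2) = 0 from rfl]

lemma dotp_zero_left {k : ℕ} (v : Fin k → ZMod 2) : dotp 0 v = 0 := by
  simp [dotp]

lemma dotp_add_right {k : ℕ} (u v w : Fin k → ZMod 2) :
    dotp u (v + w) = dotp u v + dotp u w := by
  simp [dotp, mul_add, Finset.sum_add_distrib]

/-- State evolution of the GPK algorithm (Steps 1–4): applying
`(H_n ⊗ id) ∘ U_f ∘ H_{n+m}` to the basis state `|0⟩_n ⊗ |y⟩_m` yields the state whose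
component at `(z, w)` is `(1/2ⁿ)·(Σ_x (−1)^{y·f(x) + x·z}) · 2^{−m/2}·(−1)^{y·w}`,
i.e. `(1/2ⁿ) Σ_z (Σ_x (−1)^{y·f(x) ⊕ x·z}) |z⟩_n ⊗ |γ_y⟩_m`. -/
theorem gpk_state_evolution (n m : ℕ) (f : (Fin n → ZMod 2) → Fin m → ZMod 2)
    (y : Fin m → ZMod 2)
    (Uf Hnm HnId : (((Fin n → ZMod 2) × (Fin m → ZMod 2)) → ℂ) →
                   (((Fin n → ZMod 2) × (Fin m → ZMod 2)) → ℂ))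
    (hUf : ∀ g x w, Uf g (x, w) = g (x, w + f x))
    (hHnm : ∀ g z w, Hnm g (z, w) =
      ((1 / Real.sqrt (2 ^ (n + m)) : ℝ) : ℂ) *
        ∑ x : Fin n → ZMod 2, ∑ v : Fin m → ZMod 2,
          (-1 : ℂ) ^ (dotp x z + dotp v w).val * g (x, v))
    (hHnId : ∀ g z w, HnId g (z, w) =
      ((1 / Real.sqrt (2 ^ n) : ℝ) : ℂ) *
        ∑ x : Fin n → ZMod 2, (-1 : ℂ) ^ (dotp x z).val * g (x, w))
    (δ : ((Fin n → ZMod 2) × (Fin m → ZMod 2)) → ℂ)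
    (hδ : ∀ p, δ p = if p = ((0 : Fin n → ZMod 2), y) then 1 else 0) :
    ∀ z w, HnId (Uf (Hnm δ)) (z, w) =
      (1 / (2 : ℂ) ^ n) *
        (∑ x : Fin n → ZMod 2, (-1 : ℂ) ^ (dotp y (f x) + dotp x z).val) *
        (((1 / Real.sqrt (2 ^ m) : ℝ) : ℂ) * (-1 : ℂ) ^ (dotp y w).val) := by
  intro z w
  have key : ∀ x : Fin n → ZMod 2,
      Uf (Hnm δ) (x, w) = ((1 / Real.sqrt (2 ^ (n + m)) : ℝ) : ℂ) *
        ((-1) ^ (dotp y w).val * (-1) ^ (dotp y (f x)).val) := by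
    intro x
    rw [hUf, hHnm]
    congr 1
    have h : ∀ x' : Fin n → ZMod 2, ∀ v : Fin m → ZMod 2,
        (-1 : ℂ) ^ (dotp x' x + dotp v (w + f x)).val * δ (x', v)
        = if x' = 0 then (if v = y then
            (-1 : ℂ) ^ (dotp y w).val * (-1) ^ (dotp y (f x)).val else 0) else 0 := by
      intro x' v
      rw [hδ]
      by_cases h1 : x' = 0
      · by_cases h2 : v = y
        · subst h1; subst h2
          simp [dotp_zero_left, dotp_add_right, neg_one_pow_add]
        · simp [h1, h2, Prod.ext_iff]
      · simp [h1, Prod.ext_iff]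
    simp only [h]
    simp [Finset.sum_ite_eq']
  rw [hHnId]
  simp only [key]
  have step : ∀ x : Fin n → ZMod 2,
      (-1 : ℂ) ^ (dotp x z).val * (((1 / Real.sqrt (2 ^ (n + m)) : ℝ) : ℂ) *
        ((-1) ^ (dotp y w).val * (-1) ^ (dotp y (f x)).val))
      = ((1 / Real.sqrt (2 ^ (n + m)) : ℝ) : ℂ) * (-1) ^ (dotp y w).val *
          (-1) ^ (dotp y (f x) + dotp x z).val := by
    intro x
    rw [neg_one_pow_add]
    ring
  simp only [step]
  rw [← Finset.mul_sum]
  have hr : (1 / Real.sqrt (2 ^ n) : ℝ) * (1 / Real.sqrt (2 ^ (n + m)))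
      = (1 / 2 ^ n) * (1 / Real.sqrt (2 ^ m)) := by
    have h1 : Real.sqrt (2 ^ n) * Real.sqrt (2 ^ n) = 2 ^ n :=
      Real.mul_self_sqrt (by positivity)
    rw [pow_add, Real.sqrt_mul (by positivity)]
    rw [div_mul_div_comm, one_mul, ← mul_assoc, h1, div_mul_div_comm, one_mul]
  have hc : ((1 / Real.sqrt (2 ^ n) : ℝ) : ℂ) * ((1 / Real.sqrt (2 ^ (n + m)) : ℝ) : ℂ)
      = (1 / (2 : ℂ) ^ n) * ((1 / Real.sqrt (2 ^ m) : ℝ) : ℂ) := by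
    rw [← Complex.ofReal_mul, hr]; push_cast; ring
  calc ((1 / Real.sqrt (2 ^ n) : ℝ) : ℂ) *
        (((1 / Real.sqrt (2 ^ (n + m)) : ℝ) : ℂ) * (-1) ^ (dotp y w).val *
          ∑ x : Fin n → ZMod 2, (-1 : ℂ) ^ (dotp y (f x) + dotp x z).val)
      = (((1 / Real.sqrt (2 ^ n) : ℝ) : ℂ) * ((1 / Real.sqrt (2 ^ (n + m)) : ℝ) : ℂ)) *
          (∑ x : Fin n → ZMod 2, (-1 : ℂ) ^ (dotp y (f x) + dotp x z).val) *
          (-1) ^ (dotp y w).val := by ring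
    _ = _ := by rw [hc]; ring
end

section
/- Let f : 𝔽₂ⁿ → 𝔽₂ᵐ be a Boolean function. Then the constant set C(f) is a linear subspace of 𝔽₂ᵐ (it contains 0 and is closed under addition), and for every y₁ ∈ C(f) and y₂ ∈ B(f) one has y₁ + y₂ ∈ B(f); consequently B(f) is a disjoint union of cosets of C(f). -/
lemma dotp_add {k : ℕ} (u u' v : Fin k → ZMod 2) :
    dotp (u + u') v = dotp u v + dotp u' v := by
  simp [dotp, add_mul, Finset.sum_add_distrib]

/-- The constant set `C(f)` is a linear subspace (contains `0` and is closed under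
addition), and adding an element of `C(f)` to an element of the balancing set `B(f)`
stays in `B(f)`; consequently `B(f)` is a disjoint union of cosets of `C(f)`. -/
theorem constantSet_subspace_and_balancingSet_union_of_cosets (n m : ℕ)
    (f : (Fin n → ZMod 2) → Fin m → ZMod 2) :
    IsConstantFor f 0 ∧
    (∀ y₁ y₂ : Fin m → ZMod 2,
      IsConstantFor f y₁ → IsConstantFor f y₂ → IsConstantFor f (y₁ + y₂)) ∧
    (∀ y₁ y₂ : Fin m → ZMod 2,
      IsConstantFor f y₁ → IsBalancedFor f y₂ → IsBalancedFor f (y₁ + y₂)) ∧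
    {y : Fin m → ZMod 2 | IsBalancedFor f y} =
      ⋃ y ∈ {y : Fin m → ZMod 2 | IsBalancedFor f y},
        (fun c => y + c) '' {c : Fin m → ZMod 2 | IsConstantFor f c} := by
  have hzero : IsConstantFor f 0 := by
    intro x x'; simp [dotp]
  have hadd : ∀ y₁ y₂ : Fin m → ZMod 2,
      IsConstantFor f y₁ → IsConstantFor f y₂ → IsConstantFor f (y₁ + y₂) := by
    intro y₁ y₂ h₁ h₂ x x'
    rw [dotp_add, dotp_add, h₁ x x', h₂ x x']
  have hbal : ∀ y₁ y₂ : Fin m → ZMod 2,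
      IsConstantFor f y₁ → IsBalancedFor f y₂ → IsBalancedFor f (y₁ + y₂) := by
    intro y₁ y₂ h₁ h₂
    rcases isEmpty_or_nonempty (Fin n → ZMod 2) with hE | hNE
    · unfold IsBalancedFor
      simp [Finset.filter_eq_empty_iff]
    obtain ⟨x₀⟩ := hNE
    have hc : ∀ x, dotp y₁ (f x) = dotp y₁ (f x₀) := fun x => h₁ x x₀
    unfold IsBalancedFor at *
    have key : ∀ x, dotp (y₁ + y₂) (f x) = dotp y₁ (f x₀) + dotp y₂ (f x) := by
      intro x; rw [dotp_add, hc x]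
    rcases (by decide : ∀ a : ZMod 2, a = 0 ∨ a = 1) (dotp y₁ (f x₀)) with h0 | h0
    · simp only [key, h0, zero_add]; exact h₂
    · have e0 : ∀ x, (dotp (y₁ + y₂) (f x) = 0 ↔ dotp y₂ (f x) = 1) := by
        intro x; rw [key, h0]; constructor <;> intro h <;>
          · rcases (by decide : ∀ a : ZMod 2, a = 0 ∨ a = 1) (dotp y₂ (f x)) with h' | h' <;>
              simp [h'] at h ⊢ <;> first | rfl | decide
      have e1 : ∀ x, (dotp (y₁ + y₂) (f x) = 1 ↔ dotp y₂ (f x) = 0) := by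
        intro x; rw [key, h0]; constructor <;> intro h <;>
          · rcases (by decide : ∀ a : ZMod 2, a = 0 ∨ a = 1) (dotp y₂ (f x)) with h' | h' <;>
              simp [h'] at h ⊢ <;> first | rfl | decide
      simp only [Finset.filter_congr (fun x _ => e0 x),
        Finset.filter_congr (fun x _ => e1 x)]
      exact h₂.symm
  refine ⟨hzero, hadd, hbal, ?_⟩
  ext y
  simp only [Set.mem_setOf_eq, Set.mem_iUnion, Set.mem_image]
  constructor
  · intro hy
    exact ⟨y, hy, 0, hzero, by simp⟩
  · rintro ⟨y', hy', c, hc, rfl⟩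
    have := hbal c y' hc hy'
    rwa [add_comm] at this
end

section
/- Let f : 𝔽₂ⁿ → 𝔽₂ᵐ be any Boolean function and let W ≤ 𝔽₂ᵐ be the linear span of the set of differences {f(x) + f(x') : x, x' ∈ 𝔽₂ⁿ}, with r = dim W. Then C(f) equals the orthogonal complement of W with respect to the dot-product bilinear form, i.e., C(f) = {y ∈ 𝔽₂ᵐ : y·w = 0 for all w ∈ W}; in particular C(f) is a subspace of dimension m − r and #C(f) = 2^{m−r}. -/
/-- Dot product as a bilinear map. -/
def dotB (k : ℕ) : (Fin k → ZMod 2) →ₗ[ZMod 2] (Fin k → ZMod 2) →ₗ[ZMod 2] ZMod 2 :=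
  LinearMap.mk₂ (ZMod 2) (fun u v => dotp u v)
    (by intro u u' v; simp [dotp, add_mul, Finset.sum_add_distrib])
    (by intro c u v; simp [dotp, Finset.mul_sum, mul_assoc])
    (by intro u v v'; simp [dotp, mul_add, Finset.sum_add_distrib])
    (by intro c u v; simp [dotp, Finset.mul_sum]; ring_nf; simp [mul_assoc, mul_left_comm])

lemma dotB_injective (k : ℕ) : Function.Injective (dotB k) := by
  rw [← LinearMap.ker_eq_bot]
  ext y
  simp only [LinearMap.mem_ker, Submodule.mem_bot]
  constructor
  · intro h
    funext i
    have := congrArg (fun g => g (Pi.single i 1)) h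
    simpa [dotB, dotp, Pi.single_apply, mul_ite] using this
  · rintro rfl; simp

/-- The constant set `C(f)` equals the orthogonal complement (w.r.t. the dot product)
of the span `W` of the differences of values of `f`; in particular it is a subspace of
dimension `m − r` (where `r = dim W`) and has `2^{m−r}` elements. -/
theorem constantSet_eq_orthogonal_of_differences (n m : ℕ)
    (f : (Fin n → ZMod 2) → Fin m → ZMod 2)
    (W : Submodule (ZMod 2) (Fin m → ZMod 2))
    (hW : W = Submodule.span (ZMod 2)
      {d : Fin m → ZMod 2 | ∃ x x' : Fin n → ZMod 2, d = f x + f x'})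
    (r : ℕ) (hr : r = Module.finrank (ZMod 2) W) :
    {y : Fin m → ZMod 2 | IsConstantFor f y} =
      {y : Fin m → ZMod 2 | ∀ w ∈ W, dotp y w = 0} ∧
    (∃ C : Submodule (ZMod 2) (Fin m → ZMod 2),
      (C : Set (Fin m → ZMod 2)) = {y : Fin m → ZMod 2 | IsConstantFor f y} ∧
      Module.finrank (ZMod 2) C = m - r) ∧
    Nat.card {y : Fin m → ZMod 2 | IsConstantFor f y} = 2 ^ (m - r) := by
  have key : {y : Fin m → ZMod 2 | IsConstantFor f y} =
      {y : Fin m → ZMod 2 | ∀ w ∈ W, dotp y w = 0} := by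
    ext y
    simp only [Set.mem_setOf_eq, IsConstantFor, hW]
    constructor
    · intro h w hw
      have hsub : {d : Fin m → ZMod 2 | ∃ x x' : Fin n → ZMod 2, d = f x + f x'} ⊆
          (LinearMap.ker (dotB m y) : Set (Fin m → ZMod 2)) := by
        rintro d ⟨x, x', rfl⟩
        simp only [SetLike.mem_coe, LinearMap.mem_ker, map_add]
        have h1 : (dotB m y) (f x) = dotp y (f x) := rfl
        have h2 : (dotB m y) (f x') = dotp y (f x') := rfl
        rw [h1, h2, h x x']
        exact CharTwo.add_self_eq_zero _
      have := Submodule.span_le.2 hsub hw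
      exact this
    · intro h x x'
      have := h (f x + f x') (Submodule.subset_span ⟨x, x', rfl⟩)
      have h2 : dotp y (f x) + dotp y (f x') = 0 := by
        have : (dotB m y) (f x + f x') = 0 := this
        rw [map_add] at this; exact this
      have h3 : dotp y (f x) - dotp y (f x') = 0 := by
        rw [CharTwo.sub_eq_add]; exact h2
      exact sub_eq_zero.mp h3
  -- The equivalence with the dual space
  let e : (Fin m → ZMod 2) ≃ₗ[ZMod 2] Module.Dual (ZMod 2) (Fin m → ZMod 2) :=
    (dotB m).linearEquivOfInjective (dotB_injective m) (Subspace.dual_finrank_eq).symm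
  let C : Submodule (ZMod 2) (Fin m → ZMod 2) :=
    Submodule.comap (e : (Fin m → ZMod 2) →ₗ[ZMod 2] _) W.dualAnnihilator
  have hCset : (C : Set (Fin m → ZMod 2)) = {y : Fin m → ZMod 2 | IsConstantFor f y} := by
    rw [key]
    ext y
    simp only [C, SetLike.mem_coe, Submodule.mem_comap, Submodule.mem_dualAnnihilator,
      Set.mem_setOf_eq, LinearEquiv.coe_coe]
    have he : ∀ w, (e y) w = dotp y w := fun w => by
      have : e y = dotB m y := (dotB m).linearEquivOfInjective_apply _ _ y
      rw [this]; rfl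
    constructor
    · intro h w hw; rw [← he w]; exact h w hw
    · intro h w hw; rw [he w]; exact h w hw
  have hfin : Module.finrank (ZMod 2) C = m - r := by
    have h1 : Module.finrank (ZMod 2) C = Module.finrank (ZMod 2) W.dualAnnihilator := by
      rw [show C = Submodule.comap (e : (Fin m → ZMod 2) →ₗ[ZMod 2] _) W.dualAnnihilator from rfl,
        Submodule.comap_equiv_eq_map_symm]
      exact LinearEquiv.finrank_map_eq e.symm W.dualAnnihilator
    have h2 := LinearEquiv.finrank_eq (R := ZMod 2) (M := (Fin m → ZMod 2) ⧸ W) (N := W.dualAnnihilator) (Subspace.quotEquivAnnihilator W)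
    have h3 := Submodule.finrank_quotient_add_finrank W
    have h4 : Module.finrank (ZMod 2) (Fin m → ZMod 2) = m := by
      simp [Module.finrank_pi]
    omega
  have hcard : Nat.card {y : Fin m → ZMod 2 | IsConstantFor f y} = 2 ^ (m - r) := by
    rw [← hCset]
    have : Nat.card C = 2 ^ (m - r) := by
      letI : Fintype C := Fintype.ofFinite C
      rw [Nat.card_eq_fintype_card, Module.card_eq_pow_finrank (K := ZMod 2) (V := C), hfin,
        ZMod.card]
    simpa using this
  exact ⟨key, ⟨C, hCset, hfin⟩, hcard⟩
end

section
/- Let f : 𝔽₂ⁿ → 𝔽₂ᵐ be a Boolean function and let r = dim W, where W ≤ 𝔽₂ᵐ is the linear span of {f(x) + f(x') : x, x' ∈ 𝔽₂ⁿ}. Then f is fully balanced if and only if #B(f) = (2^r − 1)·#C(f). -/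
/-- `dotp y ·` as a linear map. -/
def dotLin {k : ℕ} (y : Fin k → ZMod 2) : (Fin k → ZMod 2) →ₗ[ZMod 2] ZMod 2 where
  toFun v := dotp y v
  map_add' a b := by simp [dotp, mul_add, Finset.sum_add_distrib]
  map_smul' c a := by simp [dotp, Finset.mul_sum]; ring_nf; simp [Finset.mul_sum, mul_comm, mul_assoc, mul_left_comm]

/-- `y ↦ dotp y ·` as a linear map to the dual. -/
def dotL {k : ℕ} : (Fin k → ZMod 2) →ₗ[ZMod 2] Module.Dual (ZMod 2) (Fin k → ZMod 2) where
  toFun y := dotLin y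
  map_add' a b := by ext v; simp [dotLin, dotp, add_mul, Finset.sum_add_distrib]
  map_smul' c a := by ext v; simp [dotLin, dotp, Finset.mul_sum, mul_assoc]

theorem dotL_surjective {k : ℕ} : Function.Surjective (dotL (k := k)) := by
  intro φ
  refine ⟨fun i => φ (Pi.single i 1), ?_⟩
  refine LinearMap.ext fun v => ?_
  have hv : v = ∑ i, v i • Pi.single i (1 : ZMod 2) := by
    simp [← Pi.single_smul, Finset.univ_sum_single]
  show dotp _ v = φ v
  conv_rhs => rw [hv]
  rw [map_sum]
  simp [dotp, mul_comm]

/-- `f` is fully balanced: every `y` either balances `f` or makes it constant. -/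
def FullyBalanced {n m : ℕ} (f : (Fin n → ZMod 2) → Fin m → ZMod 2) : Prop :=
  ∀ y : Fin m → ZMod 2, IsBalancedFor f y ∨ IsConstantFor f y

theorem not_balanced_and_constant {n m : ℕ} (f : (Fin n → ZMod 2) → Fin m → ZMod 2)
    (y : Fin m → ZMod 2) (hb : IsBalancedFor f y) (hc : IsConstantFor f y) : False := by
  classical
  have hx0 : ∃ x0 : Fin n → ZMod 2, True := ⟨0, trivial⟩
  obtain ⟨x0, -⟩ := hx0
  have hconst : ∀ x, dotp y (f x) = dotp y (f x0) := fun x => hc x x0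
  unfold IsBalancedFor at hb
  have hcard : (0 : ℕ) < Fintype.card (Fin n → ZMod 2) := Fintype.card_pos
  have hz : ∀ a : ZMod 2, a = 0 ∨ a = 1 := by decide
  rcases hz (dotp y (f x0)) with h | h
  · have h1 : (Finset.univ.filter fun x => dotp y (f x) = 0) = Finset.univ := by
      ext x; simp [hconst x, h]
    have h2 : (Finset.univ.filter fun x => dotp y (f x) = 1) = ∅ := by
      ext x; simp [hconst x, h]
    rw [h1, h2] at hb
    simp [Finset.card_univ] at hb
  · have h1 : (Finset.univ.filter fun x => dotp y (f x) = 0) = ∅ := by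
      ext x; simp [hconst x, h]
    have h2 : (Finset.univ.filter fun x => dotp y (f x) = 1) = Finset.univ := by
      ext x; simp [hconst x, h]
    rw [h1, h2] at hb
    simp [Finset.card_univ, eq_comm (a := (0:ℕ))] at hb

theorem constant_iff_ker {n m : ℕ} (f : (Fin n → ZMod 2) → Fin m → ZMod 2)
    (W : Submodule (ZMod 2) (Fin m → ZMod 2))
    (hW : W = Submodule.span (ZMod 2)
      {d : Fin m → ZMod 2 | ∃ x x' : Fin n → ZMod 2, d = f x + f x'})
    (y : Fin m → ZMod 2) :
    IsConstantFor f y ↔ y ∈ LinearMap.ker (W.dualRestrict ∘ₗ dotL) := by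
  have hmem : y ∈ LinearMap.ker (W.dualRestrict ∘ₗ dotL) ↔ ∀ w ∈ W, dotLin y w = 0 := by
    constructor
    · intro h w hw
      have := LinearMap.congr_fun (LinearMap.mem_ker.mp h) ⟨w, hw⟩
      simpa [Submodule.dualRestrict_apply, dotL] using this
    · intro h
      rw [LinearMap.mem_ker]
      ext w
      simpa [Submodule.dualRestrict_apply, dotL] using h w w.2
  rw [hmem]
  constructor
  · intro hc
    have hle : W ≤ LinearMap.ker (dotLin y) := by
      rw [hW, Submodule.span_le]
      rintro d ⟨x, x', rfl⟩
      rw [SetLike.mem_coe, LinearMap.mem_ker, map_add]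
      show dotp y (f x) + dotp y (f x') = 0
      rw [hc x x', CharTwo.add_self_eq_zero]
    intro w hw
    exact LinearMap.mem_ker.mp (hle hw)
  · intro h x x'
    have hmem' : f x + f x' ∈ W := by
      rw [hW]; exact Submodule.subset_span ⟨x, x', rfl⟩
    have h0 := h _ hmem'
    rw [map_add] at h0
    have : dotp y (f x) = -(dotp y (f x')) := add_eq_zero_iff_eq_neg.mp h0
    rwa [CharTwo.neg_eq] at this

/-- With `r` the dimension of the image of `f` (i.e. of the span of the differences of
its values), `f` is fully balanced if and only if `#B(f) = (2^r − 1)·#C(f)`, i.e. the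
balancing index `b(f)` equals `2^r − 1`. -/
theorem fullyBalanced_iff_balancing_index (n m : ℕ)
    (f : (Fin n → ZMod 2) → Fin m → ZMod 2)
    (W : Submodule (ZMod 2) (Fin m → ZMod 2))
    (hW : W = Submodule.span (ZMod 2)
      {d : Fin m → ZMod 2 | ∃ x x' : Fin n → ZMod 2, d = f x + f x'})
    (r : ℕ) (hr : r = Module.finrank (ZMod 2) W) :
    FullyBalanced f ↔
      Nat.card {y : Fin m → ZMod 2 | IsBalancedFor f y} =
        (2 ^ r - 1) * Nat.card {y : Fin m → ZMod 2 | IsConstantFor f y} := by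
  classical
  set L := W.dualRestrict ∘ₗ (dotL (k := m)) with hL
  have hsurj : Function.Surjective L := Subspace.dualRestrict_surjective.comp dotL_surjective
  have hrn := LinearMap.finrank_range_add_finrank_ker L
  have hrange : LinearMap.range L = ⊤ := LinearMap.range_eq_top.mpr hsurj
  rw [hrange, finrank_top, Subspace.dual_finrank_eq, Module.finrank_fin_fun, ← hr] at hrn
  -- hrn : r + finrank (ker L) = m
  set Cs : Set (Fin m → ZMod 2) := {y | IsConstantFor f y} with hCs
  set Bs : Set (Fin m → ZMod 2) := {y | IsBalancedFor f y} with hBs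
  have hkerset : Cs = (LinearMap.ker L : Set (Fin m → ZMod 2)) := by
    ext y; exact constant_iff_ker f W hW y
  have htot : Nat.card (Fin m → ZMod 2) = 2 ^ m := by
    simp [Nat.card_eq_fintype_card, ZMod.card]
  have hCcard : Nat.card Cs = 2 ^ (m - r) := by
    rw [hkerset]
    have h1 : Nat.card (LinearMap.ker L) = 2 ^ Module.finrank (ZMod 2) (LinearMap.ker L) := by
      rw [Nat.card_eq_fintype_card, Module.card_eq_pow_finrank (K := ZMod 2), ZMod.card]
    have h2 : Module.finrank (ZMod 2) (LinearMap.ker L) = m - r := by omega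
    rw [← h2]
    exact h1
  have hrm : r ≤ m := by omega
  have hpow : 2 ^ r * 2 ^ (m - r) = 2 ^ m := by
    rw [← pow_add]; congr 1; omega
  have harith : (2 ^ r - 1) * 2 ^ (m - r) = 2 ^ m - 2 ^ (m - r) := by
    rw [Nat.sub_mul, one_mul, hpow]
  have hcompl : Csᶜ.ncard = 2 ^ m - 2 ^ (m - r) := by
    have h2 : Cs.ncard + Csᶜ.ncard = 2 ^ m := by
      rw [← htot]; exact Set.ncard_add_ncard_compl Cs
    have h3 : Cs.ncard = 2 ^ (m - r) := by
      rw [← Nat.card_coe_set_eq]; exact hCcard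
    omega
  constructor
  · intro hFB
    have hBC : Bs = Csᶜ := by
      ext y
      constructor
      · intro hb hc; exact not_balanced_and_constant f y hb hc
      · intro hnc; exact (hFB y).resolve_right hnc
    rw [Nat.card_coe_set_eq, hBC, hcompl, hCcard, harith]
  · intro h y
    by_cases hc : IsConstantFor f y
    · exact Or.inr hc
    · left
      have hsub : Bs ⊆ Csᶜ := fun z hz hcz => not_balanced_and_constant f z hz hcz
      have hBcard : Bs.ncard = 2 ^ m - 2 ^ (m - r) := by
        rw [← Nat.card_coe_set_eq, h, hCcard, harith]
      have hcard : Csᶜ.ncard ≤ Bs.ncard := by rw [hcompl, hBcard]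
      have hBC : Bs = Csᶜ := Set.eq_of_subset_of_ncard_le hsub hcard
      have : y ∈ Csᶜ := hc
      rw [← hBC] at this
      exact this
end

section
/- Let f : 𝔽₂ⁿ → 𝔽₂ᵐ be a generalised Simon function hiding the linear subspace S ≤ 𝔽₂ⁿ. If z ∈ 𝔽₂ⁿ is such that there exists x₀ ∈ S with x₀·z = 1, then for every y ∈ 𝔽₂ᵐ, Σ_{x ∈ 𝔽₂ⁿ} (−1)^{y·f(x) + x·z} = 0; i.e., the amplitude of z in the final state of the GPK algorithm with marker y is zero. -/
/-- For a generalised Simon function `f` hiding the subspace `S`, if `z` is not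
orthogonal to `S` (there is `x₀ ∈ S` with `x₀·z = 1`), then the amplitude of `z` in the
final state of the GPK algorithm with any marker `y` vanishes:
`Σ_x (−1)^{y·f(x) + x·z} = 0`. -/
theorem gpk_simon_amplitude_zero (n m : ℕ)
    (f : (Fin n → ZMod 2) → Fin m → ZMod 2)
    (S : Submodule (ZMod 2) (Fin n → ZMod 2))
    (hS : ∀ x x' : Fin n → ZMod 2, f x = f x' ↔ x + x' ∈ S)
    (z : Fin n → ZMod 2) (hz : ∃ x₀ ∈ S, dotp x₀ z = 1) :
    ∀ y : Fin m → ZMod 2,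
      (∑ x : Fin n → ZMod 2, (-1 : ℤ) ^ (dotp y (f x) + dotp x z).val) = 0 := by
  obtain ⟨x₀, hx₀S, hx₀z⟩ := hz
  intro y
  have h2 : ∀ a b : ZMod 2, a + b + a = b := by decide
  have hpow : ∀ a : ZMod 2, (-1 : ℤ) ^ (a + 1).val = -(-1 : ℤ) ^ a.val := by decide
  set g : (Fin n → ZMod 2) → ℤ := fun x => (-1 : ℤ) ^ (dotp y (f x) + dotp x z).val with hg
  have key : ∀ x, g (x + x₀) = - g x := by
    intro x
    have hf : f (x + x₀) = f x := by
      rw [hS]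
      have : x + x₀ + x = x₀ := by funext i; exact h2 (x i) (x₀ i)
      rw [this]; exact hx₀S
    have hd : dotp (x + x₀) z = dotp x z + 1 := by
      simp only [dotp, Pi.add_apply, add_mul, Finset.sum_add_distrib]
      rw [show (∑ x : Fin n, x₀ x * z x) = dotp x₀ z from rfl, hx₀z]
    simp only [hg, hf, hd, ← add_assoc]
    exact hpow _
  have hsum : (∑ x : Fin n → ZMod 2, g (x + x₀)) = ∑ x : Fin n → ZMod 2, g x :=
    Fintype.sum_equiv (Equiv.addRight x₀) (fun x => g (x + x₀)) g (fun x => rfl)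
  have : (∑ x : Fin n → ZMod 2, g x) = -∑ x : Fin n → ZMod 2, g x := by
    conv_lhs => rw [← hsum]
    simp [key]
  linarith
end
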